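/- arXiv:1510.04653 — 6 statements merged into one kernel-verified Lean document; each statement's English description precedes it below -/
import Mathlib

section
/- Let g(τ) = -τ + (1+τ)log(1+τ). For every λ with 0 < λ < 1 and every m > 0, one has g(τ) < m^(1-λ) · τ^(1+λ) for all τ with 0 < τ ≤ m. -/
theorem g_lt_on_small (lam m τ : ℝ) (hlam0 : 0 < lam) (hlam1 : lam < 1)
    (hm : 0 < m) (hτ0 : 0 < τ) (hτm : τ ≤ m) :
    -τ + (1 + τ) * Real.log (1 + τ) < m ^ (1 - lam) * τ ^ (1 + lam) := by
  have hlog : Real.log (1 + τ) < τ := by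
    have := Real.log_lt_sub_one_of_pos (by linarith : (0:ℝ) < 1 + τ) (by linarith)
    linarith
  have h1 : -τ + (1 + τ) * Real.log (1 + τ) < τ ^ (2:ℝ) := by
    have hsq : τ ^ (2:ℝ) = τ * τ := by
      rw [show (2:ℝ) = ((2:ℕ):ℝ) by norm_num, Real.rpow_natCast]; ring
    rw [hsq]
    nlinarith [mul_lt_mul_of_pos_left hlog (by linarith : (0:ℝ) < 1 + τ)]
  have h2 : τ ^ (2:ℝ) = τ ^ (1 - lam) * τ ^ (1 + lam) := by
    rw [← Real.rpow_add hτ0]; norm_num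
  have h3 : τ ^ (1 - lam) ≤ m ^ (1 - lam) :=
    Real.rpow_le_rpow hτ0.le hτm (by linarith)
  have h4 : τ ^ (1 - lam) * τ ^ (1 + lam) ≤ m ^ (1 - lam) * τ ^ (1 + lam) :=
    mul_le_mul_of_nonneg_right h3 (Real.rpow_nonneg hτ0.le _)
  linarith [h2 ▸ h1]
end

section
/- Let g(τ) = -τ + (1+τ)log(1+τ). For every λ with 0 < λ < 1 and every m > 0, one has g(τ) < ((1+m)/m)^(1+λ) · (1/(λe)) · τ^(1+λ) for all τ ≥ m. -/
lemma log_le_div_e (y : ℝ) (hy : 0 < y) : Real.log y ≤ y / Real.exp 1 := by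
  have he : (0:ℝ) < Real.exp 1 := Real.exp_pos 1
  have h := Real.log_le_sub_one_of_pos (show 0 < y / Real.exp 1 from div_pos hy he)
  rw [Real.log_div (ne_of_gt hy) (ne_of_gt he), Real.log_exp] at h
  linarith

lemma log_le_rpow (x lam : ℝ) (hx : 0 < x) (hl : 0 < lam) :
    Real.log x ≤ x ^ lam / (lam * Real.exp 1) := by
  have h1 : Real.log (x ^ lam) = lam * Real.log x := Real.log_rpow hx lam
  have h2 := log_le_div_e (x ^ lam) (Real.rpow_pos_of_pos hx lam)
  rw [h1] at h2
  rw [le_div_iff₀ (by positivity)]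
  rw [div_eq_mul_inv] at h2
  have he : (0:ℝ) < Real.exp 1 := Real.exp_pos 1
  have h3 := mul_le_mul_of_nonneg_right h2 he.le
  rw [mul_assoc (x ^ lam), inv_mul_cancel₀ (Real.exp_ne_zero 1), mul_one] at h3
  nlinarith [h3]

theorem g_lt_on_large (lam m τ : ℝ) (hlam0 : 0 < lam) (hlam1 : lam < 1)
    (hm : 0 < m) (hτ : m ≤ τ) :
    -τ + (1 + τ) * Real.log (1 + τ) <
      ((1 + m) / m) ^ (1 + lam) * (1 / (lam * Real.exp 1)) * τ ^ (1 + lam) := by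
  have hτ0 : 0 < τ := lt_of_lt_of_le hm hτ
  have h1τ : (0:ℝ) < 1 + τ := by linarith
  have he : (0:ℝ) < Real.exp 1 := Real.exp_pos 1
  have hle : Real.log (1 + τ) ≤ (1 + τ) ^ lam / (lam * Real.exp 1) :=
    log_le_rpow _ _ h1τ hlam0
  have step2 : (1 + τ) * Real.log (1 + τ) ≤ (1 + τ) ^ (1 + lam) / (lam * Real.exp 1) := by
    have : (1 + τ) ^ (1 + lam) = (1 + τ) * (1 + τ) ^ lam := by
      rw [Real.rpow_add h1τ, Real.rpow_one]
    rw [this, mul_div_assoc]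
    exact mul_le_mul_of_nonneg_left hle (le_of_lt h1τ)
  have hbound : 1 + τ ≤ (1 + m) / m * τ := by
    rw [div_mul_eq_mul_div, le_div_iff₀ hm]
    nlinarith
  have step3 : (1 + τ) ^ (1 + lam) ≤ ((1 + m) / m) ^ (1 + lam) * τ ^ (1 + lam) := by
    have h := Real.rpow_le_rpow (le_of_lt h1τ) hbound (by linarith : (0:ℝ) ≤ 1 + lam)
    rwa [Real.mul_rpow (by positivity) (le_of_lt hτ0)] at h
  have hfin : ((1 + m) / m) ^ (1 + lam) * (1 / (lam * Real.exp 1)) * τ ^ (1 + lam)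
      = ((1 + m) / m) ^ (1 + lam) * τ ^ (1 + lam) / (lam * Real.exp 1) := by
    ring
  rw [hfin]
  have : (1 + τ) ^ (1 + lam) / (lam * Real.exp 1)
      ≤ ((1 + m) / m) ^ (1 + lam) * τ ^ (1 + lam) / (lam * Real.exp 1) :=
    by gcongr
  linarith
end

section
/- Let g(τ) = -τ + (1+τ)log(1+τ). For every λ with 0 < λ < 1, setting C(λ) = max{1, 2^(1+λ)/(λe)}, one has 0 ≤ g(τ) < C(λ)·τ^(1+λ) for all τ > 0. -/
theorem g_bounds (lam : ℝ) (hlam0 : 0 < lam) (hlam1 : lam < 1) (τ : ℝ) (hτ : 0 < τ) :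
    0 ≤ -τ + (1 + τ) * Real.log (1 + τ) ∧
      -τ + (1 + τ) * Real.log (1 + τ) <
        max 1 ((2 : ℝ) ^ (1 + lam) / (lam * Real.exp 1)) * τ ^ (1 + lam) := by
  have h1τ : (0:ℝ) < 1 + τ := by linarith
  constructor
  · -- lower bound: log(1/(1+τ)) ≤ 1/(1+τ) - 1
    have h := Real.log_le_sub_one_of_pos (show (0:ℝ) < (1+τ)⁻¹ by positivity)
    rw [Real.log_inv] at h
    have h2 : (1+τ) * (1+τ)⁻¹ = 1 := mul_inv_cancel₀ (ne_of_gt h1τ)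
    nlinarith [mul_le_mul_of_nonneg_left h (le_of_lt h1τ)]
  · have hpow : (0:ℝ) < τ ^ (1 + lam) := Real.rpow_pos_of_pos hτ _
    rcases le_or_gt τ 1 with hle | hgt
    · -- small τ: g < τ² ≤ τ^(1+λ)
      have hlog : Real.log (1 + τ) < τ := by
        have := Real.log_lt_sub_one_of_pos h1τ (by linarith)
        linarith
      have hg : -τ + (1 + τ) * Real.log (1 + τ) < τ ^ (2:ℝ) := by
        rw [Real.rpow_two]
        nlinarith [Real.log_nonneg (show (1:ℝ) ≤ 1 + τ by linarith)]
      have h2 : τ ^ (2:ℝ) ≤ τ ^ (1 + lam) :=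
        Real.rpow_le_rpow_of_exponent_ge hτ hle (by linarith)
      have hC : (1:ℝ) ≤ max 1 ((2 : ℝ) ^ (1 + lam) / (lam * Real.exp 1)) := le_max_left _ _
      calc -τ + (1 + τ) * Real.log (1 + τ) < τ ^ (2:ℝ) := hg
        _ ≤ τ ^ (1 + lam) := h2
        _ = 1 * τ ^ (1 + lam) := (one_mul _).symm
        _ ≤ _ := mul_le_mul_of_nonneg_right hC hpow.le
    · -- large τ: g < (1+τ)log(1+τ) ≤ 2τ log(2τ) ≤ 2τ (2τ)^λ/(λe)
      have h2τ : (0:ℝ) < 2 * τ := by linarith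
      have hlognn : 0 ≤ Real.log (1 + τ) := Real.log_nonneg (by linarith)
      have hstep1 : -τ + (1 + τ) * Real.log (1 + τ) < (1 + τ) * Real.log (1 + τ) := by
        linarith
      have hstep2 : (1 + τ) * Real.log (1 + τ) ≤ (2 * τ) * Real.log (2 * τ) := by
        apply mul_le_mul (by linarith) (Real.log_le_log h1τ (by linarith)) hlognn (by linarith)
      have hkey : Real.log (2 * τ) ≤ (2 * τ) ^ lam / (lam * Real.exp 1) := by
        have h1 : Real.log ((2 * τ) ^ lam) ≤ (2 * τ) ^ lam / Real.exp 1 :=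
          log_le_div_e _ (Real.rpow_pos_of_pos h2τ _)
        rw [Real.log_rpow h2τ] at h1
        rw [div_mul_eq_div_div_swap, le_div_iff₀ hlam0]
        linarith
      have hstep3 : (2 * τ) * Real.log (2 * τ) ≤
          (2 : ℝ) ^ (1 + lam) / (lam * Real.exp 1) * τ ^ (1 + lam) := by
        have hmul : (2 * τ) * ((2 * τ) ^ lam / (lam * Real.exp 1)) =
            (2 : ℝ) ^ (1 + lam) / (lam * Real.exp 1) * τ ^ (1 + lam) := by
          rw [Real.mul_rpow (by norm_num) hτ.le,
            Real.rpow_add (by norm_num : (0:ℝ) < 2), Real.rpow_add hτ,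
            Real.rpow_one, Real.rpow_one]
          field_simp
        calc (2 * τ) * Real.log (2 * τ) ≤ (2 * τ) * ((2 * τ) ^ lam / (lam * Real.exp 1)) :=
              mul_le_mul_of_nonneg_left hkey h2τ.le
          _ = _ := hmul
      have hC : (2 : ℝ) ^ (1 + lam) / (lam * Real.exp 1) ≤
          max 1 ((2 : ℝ) ^ (1 + lam) / (lam * Real.exp 1)) := le_max_right _ _
      calc -τ + (1 + τ) * Real.log (1 + τ) < (1 + τ) * Real.log (1 + τ) := hstep1
        _ ≤ (2 * τ) * Real.log (2 * τ) := hstep2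
        _ ≤ (2 : ℝ) ^ (1 + lam) / (lam * Real.exp 1) * τ ^ (1 + lam) := hstep3
        _ ≤ _ := mul_le_mul_of_nonneg_right hC hpow.le
end

section
/- Let c₀ ≥ 0 and δ₀ > 0 be real numbers. Then there exists a C¹ function ψ : ℝ → ℝ with ψ(0) = 0 and ψ'(s) - (c₀+δ₀)|ψ(s)| ≥ 1/2 for all s ∈ ℝ. In particular ψ(s) = s·exp(((c₀+δ₀)²/4)·s²) is such a function. -/
lemma psi_hasDerivAt (c s : ℝ) :
    HasDerivAt (fun s : ℝ => s * Real.exp (c * s ^ 2))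
      (Real.exp (c * s ^ 2) * (1 + 2 * c * s ^ 2)) s := by
  have h1 : HasDerivAt (fun s : ℝ => c * s ^ 2) (c * (2 * s)) s := by
    simpa using ((hasDerivAt_pow 2 s).const_mul c)
  have h2 := h1.exp
  have h3 : HasDerivAt (fun s : ℝ => s * Real.exp (c * s ^ 2))
      (1 * Real.exp (c * s ^ 2) + s * (Real.exp (c * s ^ 2) * (c * (2 * s)))) s :=
    (hasDerivAt_id' s).mul h2
  convert h3 using 1
  simp [Real.exp_ne_zero]
  ring

lemma psi_main (a : ℝ) (ha : 0 < a) :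
    ContDiff ℝ 1 (fun s : ℝ => s * Real.exp (a ^ 2 / 4 * s ^ 2)) ∧
      (fun s : ℝ => s * Real.exp (a ^ 2 / 4 * s ^ 2)) 0 = 0 ∧
      ∀ s : ℝ,
        deriv (fun s : ℝ => s * Real.exp (a ^ 2 / 4 * s ^ 2)) s -
            a * |s * Real.exp (a ^ 2 / 4 * s ^ 2)| ≥ 1 / 2 := by
  set c := a ^ 2 / 4 with hc
  refine ⟨?_, by simp, ?_⟩
  · exact (contDiff_id.mul ((contDiff_const.mul (contDiff_id.pow 2)).exp))
  · intro s
    have hd := (psi_hasDerivAt c s).deriv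
    rw [hd]
    have hE : (1 : ℝ) ≤ Real.exp (c * s ^ 2) := by
      apply Real.one_le_exp
      positivity
    have habs : |s * Real.exp (c * s ^ 2)| = |s| * Real.exp (c * s ^ 2) := by
      rw [abs_mul, abs_of_pos (Real.exp_pos _)]
    rw [habs]
    have hs2 : |s| ^ 2 = s ^ 2 := sq_abs s
    have h0 : 0 ≤ |s| := abs_nonneg s
    have heq : Real.exp (c * s ^ 2) * (1 + 2 * c * s ^ 2) -
        a * (|s| * Real.exp (c * s ^ 2)) =
        Real.exp (c * s ^ 2) * (1 / 2 + (a * |s| - 1) ^ 2 / 2) := by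
      rw [hc, ← hs2]; ring
    rw [heq]
    nlinarith [sq_nonneg (a * |s| - 1), Real.exp_pos (c * s ^ 2)]

theorem psi_exists (c₀ δ₀ : ℝ) (hc₀ : 0 ≤ c₀) (hδ₀ : 0 < δ₀) :
    (ContDiff ℝ 1 (fun s : ℝ => s * Real.exp ((c₀ + δ₀) ^ 2 / 4 * s ^ 2)) ∧
      (fun s : ℝ => s * Real.exp ((c₀ + δ₀) ^ 2 / 4 * s ^ 2)) 0 = 0 ∧
      ∀ s : ℝ,
        deriv (fun s : ℝ => s * Real.exp ((c₀ + δ₀) ^ 2 / 4 * s ^ 2)) s -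
            (c₀ + δ₀) * |s * Real.exp ((c₀ + δ₀) ^ 2 / 4 * s ^ 2)| ≥ 1 / 2) ∧
    ∃ ψ : ℝ → ℝ, ContDiff ℝ 1 ψ ∧ ψ 0 = 0 ∧
      ∀ s : ℝ, deriv ψ s - (c₀ + δ₀) * |ψ s| ≥ 1 / 2 := by
  have ha : 0 < c₀ + δ₀ := by linarith
  obtain ⟨h1, h2, h3⟩ := psi_main (c₀ + δ₀) ha
  exact ⟨⟨h1, h2, h3⟩, _, h1, h2, h3⟩
end

section
/- Let A be an N×N matrix satisfying α|ξ|² ≤ A·ξ·ξ for all ξ ∈ ℝᴺ with α > 0, and let H : ℝ × ℝᴺ → ℝ satisfy -c₀·(Aξ·ξ) ≤ H(s,ξ)·sign(s) ≤ γ·(Aξ·ξ) for all s, ξ, with γ > 0, c₀ ≥ 0. For δ > 0 define K_δ(t,ζ) = (δ/(1+δ|t|))·(Aζ·ζ) - (1+δ|t|)·H((1/δ)log(1+δ|t|)·sign(t), ζ/(1+δ|t|))·sign(t). Then (c₀+δ)·(Aζ·ζ) ≥ K_δ(t,ζ) ≥ ((δ-γ)/(1+δ|t|))·(Aζ·ζ)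 ≥ -|δ-γ|·(Aζ·ζ) for all t ∈ ℝ, ζ ∈ ℝᴺ. -/
open Matrix

set_option maxHeartbeats 2000000 in
theorem K_delta_bounds (N : ℕ) (A : Matrix (Fin N) (Fin N) ℝ) (α : ℝ) (hα : 0 < α)
    (hA : ∀ ξ : Fin N → ℝ, α * (∑ i, ξ i ^ 2) ≤ A.mulVec ξ ⬝ᵥ ξ)
    (H : ℝ → (Fin N → ℝ) → ℝ) (γ c₀ : ℝ) (hγ : 0 < γ) (hc₀ : 0 ≤ c₀)
    (hH : ∀ (s : ℝ) (ξ : Fin N → ℝ),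
      -c₀ * (A.mulVec ξ ⬝ᵥ ξ) ≤ H s ξ * Real.sign s ∧
        H s ξ * Real.sign s ≤ γ * (A.mulVec ξ ⬝ᵥ ξ))
    (δ : ℝ) (hδ : 0 < δ)
    (K : ℝ → (Fin N → ℝ) → ℝ)
    (hK : ∀ (t : ℝ) (ζ : Fin N → ℝ),
      K t ζ = (δ / (1 + δ * |t|)) * (A.mulVec ζ ⬝ᵥ ζ) -
        (1 + δ * |t|) *
          H ((1 / δ) * Real.log (1 + δ * |t|) * Real.sign t) (fun i => ζ i / (1 + δ * |t|)) *
            Real.sign t) :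
    ∀ (t : ℝ) (ζ : Fin N → ℝ),
      K t ζ ≤ (c₀ + δ) * (A.mulVec ζ ⬝ᵥ ζ) ∧
        ((δ - γ) / (1 + δ * |t|)) * (A.mulVec ζ ⬝ᵥ ζ) ≤ K t ζ ∧
        -|δ - γ| * (A.mulVec ζ ⬝ᵥ ζ) ≤ ((δ - γ) / (1 + δ * |t|)) * (A.mulVec ζ ⬝ᵥ ζ) := by
  intro t ζ
  have hQ0' : 0 ≤ A.mulVec ζ ⬝ᵥ ζ := le_trans (by positivity) (hA ζ)
  rw [hK t ζ]
  set Q := A.mulVec ζ ⬝ᵥ ζ with hQdef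
  set m := 1 + δ * |t| with hmdef
  have hscale : A.mulVec (fun i => ζ i / m) ⬝ᵥ (fun i => ζ i / m) = Q / m ^ 2 := by
    have hm0 : (0 : ℝ) < m := by nlinarith [abs_nonneg t, hδ.le]
    have h : (fun i => ζ i / m) = m⁻¹ • ζ := by funext i; simp [div_eq_inv_mul]
    rw [h, Matrix.mulVec_smul, smul_dotProduct, dotProduct_smul, smul_eq_mul,
      smul_eq_mul, hQdef, eq_div_iff (by positivity : (m : ℝ) ^ 2 ≠ 0), pow_two]
    have hm : m ≠ 0 := hm0.ne'
    field_simp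
  have hQ0 : 0 ≤ Q := hQ0'
  have hm1 : 1 ≤ m := by rw [hmdef]; nlinarith [abs_nonneg t, hδ.le]
  clear_value Q m
  have hm0 : (0 : ℝ) < m := one_pos.trans_le hm1
  have h3 : -|δ - γ| * Q ≤ ((δ - γ) / m) * Q := by
    apply mul_le_mul_of_nonneg_right _ hQ0
    rw [le_div_iff₀ hm0]
    nlinarith [neg_abs_le (δ - γ), abs_nonneg (δ - γ)]
  refine ⟨?_, ?_, h3⟩ <;>
  · set P := Q / m ^ 2 with hPdef
    have hQP : Q = P * m ^ 2 := by rw [hPdef]; field_simp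
    have hP0 : 0 ≤ P := by rw [hPdef]; positivity
    clear_value P
    have e1 : δ / m * (P * m ^ 2) = δ * P * m := by field_simp
    have e2 : (δ - γ) / m * (P * m ^ 2) = (δ - γ) * P * m := by field_simp
    have h5 : (0 : ℝ) ≤ (c₀ + δ) * (P * m * (m - 1)) :=
      mul_nonneg (add_nonneg hc₀ hδ.le)
        (mul_nonneg (mul_nonneg hP0 hm0.le) (by linarith))
    rcases lt_trichotomy t 0 with ht | ht | ht
    · have hst : Real.sign t = -1 := Real.sign_of_neg ht
      have hmgt : 1 < m := by
        have h0 : 0 < |t| := abs_pos.mpr ht.ne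
        rw [hmdef]; nlinarith
      have hlog : 0 < Real.log m := Real.log_pos hmgt
      have hs : Real.sign ((1 / δ) * Real.log m * (-1 : ℝ)) = -1 := by
        apply Real.sign_of_neg
        have : 0 < (1 / δ) * Real.log m := by positivity
        linarith
      obtain ⟨hl, hu⟩ := hH ((1 / δ) * Real.log m * (-1 : ℝ)) (fun i => ζ i / m)
      rw [hscale] at hl hu
      rw [hs] at hl hu
      rw [hst, hQP, e1]
      try rw [e2]
      set Hv := H ((1 / δ) * Real.log m * (-1 : ℝ)) (fun i => ζ i / m) with hHv
      clear_value Hv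
      clear hH hK hA hscale hQdef hPdef hHv h3 hQ0 hQ0' hQP
      first
      | nlinarith [mul_le_mul_of_nonneg_left hl hm0.le, h5]
      | nlinarith [mul_le_mul_of_nonneg_left hu hm0.le]
    · rw [ht] at hmdef
      simp only [abs_zero, mul_zero, add_zero] at hmdef
      rw [ht, Real.sign_zero, hmdef, hQP, hmdef]
      simp only [mul_zero, sub_zero, div_one, one_pow, mul_one]
      clear hH hK hA hscale hQdef hPdef h3 hQ0 hQ0' hQP
      first
      | nlinarith [hP0, hc₀, hδ.le]
      | nlinarith [hP0, hγ.le]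
    · have hst : Real.sign t = 1 := Real.sign_of_pos ht
      have hmgt : 1 < m := by
        have h0 : 0 < |t| := abs_pos.mpr ht.ne'
        rw [hmdef]; nlinarith
      have hlog : 0 < Real.log m := Real.log_pos hmgt
      have hs : Real.sign ((1 / δ) * Real.log m * (1 : ℝ)) = 1 := by
        apply Real.sign_of_pos; positivity
      obtain ⟨hl, hu⟩ := hH ((1 / δ) * Real.log m * (1 : ℝ)) (fun i => ζ i / m)
      rw [hscale] at hl hu
      rw [hs] at hl hu
      rw [hst, hQP, e1]
      try rw [e2]
      set Hv := H ((1 / δ) * Real.log m * (1 : ℝ)) (fun i => ζ i / m) with hHv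
      clear_value Hv
      clear hH hK hA hscale hQdef hPdef hHv h3 hQ0 hQ0' hQP
      first
      | nlinarith [mul_le_mul_of_nonneg_left hl hm0.le, h5]
      | nlinarith [mul_le_mul_of_nonneg_left hu hm0.le]
end

section
/- Under the coercivity and growth assumptions on A and H, if δ ≥ γ then the function K_δ satisfies 0 ≤ K_δ(t,ζ) ≤ (c₀+δ)·(Aζ·ζ) for all t ∈ ℝ and ζ ∈ ℝᴺ. -/
open Matrix

theorem K_delta_nonneg (N : ℕ) (A : Matrix (Fin N) (Fin N) ℝ) (α : ℝ) (hα : 0 < α)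
    (hA : ∀ ξ : Fin N → ℝ, α * (∑ i, ξ i ^ 2) ≤ A.mulVec ξ ⬝ᵥ ξ)
    (H : ℝ → (Fin N → ℝ) → ℝ) (γ c₀ : ℝ) (hγ : 0 < γ) (hc₀ : 0 ≤ c₀)
    (hH : ∀ (s : ℝ) (ξ : Fin N → ℝ),
      -c₀ * (A.mulVec ξ ⬝ᵥ ξ) ≤ H s ξ * Real.sign s ∧
        H s ξ * Real.sign s ≤ γ * (A.mulVec ξ ⬝ᵥ ξ))
    (δ : ℝ) (hδγ : γ ≤ δ)
    (K : ℝ → (Fin N → ℝ) → ℝ)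
    (hK : ∀ (t : ℝ) (ζ : Fin N → ℝ),
      K t ζ = (δ / (1 + δ * |t|)) * (A.mulVec ζ ⬝ᵥ ζ) -
        (1 + δ * |t|) *
          H ((1 / δ) * Real.log (1 + δ * |t|) * Real.sign t) (fun i => ζ i / (1 + δ * |t|)) *
            Real.sign t) :
    ∀ (t : ℝ) (ζ : Fin N → ℝ),
      0 ≤ K t ζ ∧ K t ζ ≤ (c₀ + δ) * (A.mulVec ζ ⬝ᵥ ζ) := by
  have hδ : 0 < δ := lt_of_lt_of_le hγ hδγ
  intro t ζ
  set u : ℝ := 1 + δ * |t| with hu_def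
  have hu1 : 1 ≤ u := by
    have : 0 ≤ δ * |t| := mul_nonneg hδ.le (abs_nonneg t)
    simp [hu_def]; linarith
  have hu0 : 0 < u := lt_of_lt_of_le one_pos hu1
  set Q : ℝ := A.mulVec ζ ⬝ᵥ ζ with hQ_def
  have hQ : 0 ≤ Q := by
    refine le_trans ?_ (hA ζ)
    positivity
  have hscale : A.mulVec (fun i => ζ i / u) ⬝ᵥ (fun i => ζ i / u) = Q / u ^ 2 := by
    have h : (fun i => ζ i / u) = u⁻¹ • ζ := by
      ext i; simp [div_eq_inv_mul]
    rw [h, Matrix.mulVec_smul, smul_dotProduct, dotProduct_smul, smul_eq_mul, smul_eq_mul,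
      hQ_def, eq_div_iff (pow_ne_zero 2 hu0.ne')]
    field_simp
  rw [hK]
  by_cases ht : t = 0
  · subst ht
    simp only [abs_zero, mul_zero, add_zero, Real.sign_zero, mul_zero, div_one, sub_zero]
    constructor
    · exact mul_nonneg hδ.le hQ
    · nlinarith
  · -- t ≠ 0
    have habs : 0 < |t| := abs_pos.mpr ht
    have hu_gt : 1 < u := by
      have : 0 < δ * |t| := mul_pos hδ habs
      simp [hu_def]; linarith
    have hlog : 0 < Real.log u := Real.log_pos hu_gt
    have hc : 0 < (1 / δ) * Real.log u := by positivity
    have hssign : Real.sign ((1 / δ) * Real.log u * Real.sign t) = Real.sign t := by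
      rcases lt_or_gt_of_ne ht with h | h
      · rw [Real.sign_of_neg h, Real.sign_of_neg]
        nlinarith
      · rw [Real.sign_of_pos h, Real.sign_of_pos]
        nlinarith
    obtain ⟨hlo, hhi⟩ := hH ((1 / δ) * Real.log u * Real.sign t) (fun i => ζ i / u)
    rw [hssign, hscale] at hlo hhi
    set B : ℝ := H ((1 / δ) * Real.log u * Real.sign t) (fun i => ζ i / u) * Real.sign t
      with hB_def
    have hlo' : -(c₀ * Q) ≤ u ^ 2 * B := by
      have h1 := mul_le_mul_of_nonneg_left hlo (le_of_lt (pow_pos hu0 2))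
      have h2 : u ^ 2 * (-c₀ * (Q / u ^ 2)) = -(c₀ * Q) := by
        field_simp
      rw [← h2]; exact h1
    have hhi' : u ^ 2 * B ≤ γ * Q := by
      have h1 := mul_le_mul_of_nonneg_left hhi (le_of_lt (pow_pos hu0 2))
      have h2 : u ^ 2 * (γ * (Q / u ^ 2)) = γ * Q := by field_simp
      calc u ^ 2 * B ≤ u ^ 2 * (γ * (Q / u ^ 2)) := h1
        _ = γ * Q := h2
    have hexpr : δ / u * Q - u * H ((1 / δ) * Real.log u * Real.sign t)
        (fun i => ζ i / u) * Real.sign t = (δ * Q - u ^ 2 * B) / u := by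
      rw [hB_def]
      field_simp
    rw [hexpr]
    constructor
    · apply div_nonneg _ hu0.le
      nlinarith [mul_nonneg (sub_nonneg.mpr hδγ) hQ]
    · rw [div_le_iff₀ hu0]
      nlinarith [mul_nonneg (add_nonneg hc₀ hδ.le) hQ]
end
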